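/- Define for z > 0 the function S(z) := 3 + z·(K_1(z)/K_2(z)) + ( 4·(K_1/K_2) + z·(K_1/K_2)² − z ) / ( 3·(K_1/K_2) + z·(K_1/K_2)² − z − 4/z ). Then for 0 < z ≤ 1/10, | S(z) − 3 | ≤ (7/10) z². In particular the squared speed of sound (∂p/∂ρ)|_η = 1/S(z) satisfies |1/S(z) − 1/3| ≤ z² for such z. -/

import Mathlib

/-!
Since `l - z ≤ √(l² - z²) ≤ l` for `l ≥ z ≥ 0`, the integrals defining `z K₁(z)` and
`z² K₂(z)` are squeezed between elementary moments `∫_z^∞ lⁿ e^{-l} dl`, which pins down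
`K₁/K₂ = z/2 + O(z²)`. On the other hand `S(z) - 3` is an explicit rational function of `z` and
`r = K₁/K₂` which lies between `0` and `z r` as soon as `z/4 ≤ r ≤ 1/2`.
-/

open Real MeasureTheory

/-- `K_1(z) = z⁻¹ ∫_z^∞ e^{-λ}(λ²−z²)^{1/2} dλ`. -/
noncomputable def K1 (z : ℝ) : ℝ :=
  z⁻¹ * ∫ l in Set.Ioi z, Real.exp (-l) * Real.sqrt (l ^ 2 - z ^ 2)

/-- `K_2(z) = z⁻² ∫_z^∞ λ e^{-λ}(λ²−z²)^{1/2} dλ`. -/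
noncomputable def K2 (z : ℝ) : ℝ :=
  z ^ (-2 : ℤ) * ∫ l in Set.Ioi z, l * Real.exp (-l) * Real.sqrt (l ^ 2 - z ^ 2)

/-- `S(z) = (∂_z|_η ρ)/(∂_z|_η p)`, the reciprocal of the squared speed of sound. -/
noncomputable def S (z : ℝ) : ℝ :=
  3 + z * (K1 z / K2 z) +
    (4 * (K1 z / K2 z) + z * (K1 z / K2 z) ^ 2 - z) /
      (3 * (K1 z / K2 z) + z * (K1 z / K2 z) ^ 2 - z - 4 / z)

open Set Filter Topology

section ExpMoments

variable {a : ℝ}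

lemma hasDerivAt_neg_add_one_mul_exp_neg (x : ℝ) :
    HasDerivAt (fun x => -((x + 1) * exp (-x))) (x * exp (-x)) x :=
  (((hasDerivAt_id x).add_const 1).mul (hasDerivAt_neg x).exp).neg.congr_deriv
    (by simp only [id]; ring)

lemma hasDerivAt_neg_sq_add_mul_exp_neg (x : ℝ) :
    HasDerivAt (fun x => -((x ^ 2 + 2 * x + 2) * exp (-x))) (x ^ 2 * exp (-x)) x :=
  ((((hasDerivAt_pow 2 x).add ((hasDerivAt_id x).const_mul 2)).add_const 2).mul
    (hasDerivAt_neg x).exp).neg.congr_deriv (by simp only [id, Pi.add_apply]; ring)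

lemma tendsto_neg_add_one_mul_exp_neg :
    Tendsto (fun x => -((x + 1) * exp (-x))) atTop (𝓝 0) := by
  simpa [add_mul] using
    ((tendsto_pow_mul_exp_neg_atTop_nhds_zero 1).add tendsto_exp_neg_atTop_nhds_zero).neg

lemma tendsto_neg_sq_add_mul_exp_neg :
    Tendsto (fun x => -((x ^ 2 + 2 * x + 2) * exp (-x))) atTop (𝓝 0) := by
  have h := ((tendsto_pow_mul_exp_neg_atTop_nhds_zero 2).add
    (((tendsto_pow_mul_exp_neg_atTop_nhds_zero 1).const_mul 2).add
      (tendsto_exp_neg_atTop_nhds_zero.const_mul 2))).neg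
  simp only [pow_one, mul_zero, add_zero, neg_zero] at h
  exact h.congr fun x => by ring

lemma integrableOn_Ioi_mul_exp_neg (ha : 0 ≤ a) :
    IntegrableOn (fun x => x * exp (-x)) (Ioi a) :=
  integrableOn_Ioi_deriv_of_nonneg' (fun x _ => hasDerivAt_neg_add_one_mul_exp_neg x)
    (fun _ hx => mul_nonneg (ha.trans hx.le) (exp_pos _).le) tendsto_neg_add_one_mul_exp_neg

lemma integral_Ioi_mul_exp_neg (ha : 0 ≤ a) :
    ∫ x in Ioi a, x * exp (-x) = (a + 1) * exp (-a) := by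
  rw [integral_Ioi_of_hasDerivAt_of_nonneg' (fun x _ => hasDerivAt_neg_add_one_mul_exp_neg x)
    (fun _ hx => mul_nonneg (ha.trans hx.le) (exp_pos _).le) tendsto_neg_add_one_mul_exp_neg]
  ring

lemma integrableOn_Ioi_sq_mul_exp_neg : IntegrableOn (fun x => x ^ 2 * exp (-x)) (Ioi a) :=
  integrableOn_Ioi_deriv_of_nonneg' (fun x _ => hasDerivAt_neg_sq_add_mul_exp_neg x)
    (fun _ _ => by positivity) tendsto_neg_sq_add_mul_exp_neg

lemma integral_Ioi_sq_mul_exp_neg :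
    ∫ x in Ioi a, x ^ 2 * exp (-x) = (a ^ 2 + 2 * a + 2) * exp (-a) := by
  rw [integral_Ioi_of_hasDerivAt_of_nonneg' (fun x _ => hasDerivAt_neg_sq_add_mul_exp_neg x)
    (fun _ _ => by positivity) tendsto_neg_sq_add_mul_exp_neg]
  ring

end ExpMoments

section SqrtKernel

lemma sub_le_sqrt_sq_sub_sq {z : ℝ} (hz : 0 ≤ z) (l : ℝ) : l - z ≤ √(l ^ 2 - z ^ 2) := by
  rcases le_or_gt l z with hl | hl
  · exact (sub_nonpos.2 hl).trans (sqrt_nonneg _)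
  · exact le_sqrt_of_sq_le (by nlinarith)

lemma sqrt_sq_sub_sq_le {l : ℝ} (hl : 0 ≤ l) (z : ℝ) : √(l ^ 2 - z ^ 2) ≤ l :=
  sqrt_le_iff.2 ⟨hl, by nlinarith [sq_nonneg z]⟩

variable {z : ℝ}

lemma integral_mul_sqrt_sq_sub_sq_mem_Icc {w : ℝ → ℝ} (hz : 0 ≤ z)
    (hw : ∀ l ∈ Ioi z, 0 ≤ w l) (hw_int : IntegrableOn w (Ioi z))
    (hlw_int : IntegrableOn (fun l => l * w l) (Ioi z)) :
    ∫ l in Ioi z, w l * √(l ^ 2 - z ^ 2) ∈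
      Icc ((∫ l in Ioi z, l * w l) - z * ∫ l in Ioi z, w l) (∫ l in Ioi z, l * w l) := by
  have h_int : IntegrableOn (fun l => w l * √(l ^ 2 - z ^ 2)) (Ioi z) := by
    refine hlw_int.mono' (hw_int.aestronglyMeasurable.mul (by fun_prop : Continuous
      fun l : ℝ => √(l ^ 2 - z ^ 2)).aestronglyMeasurable) ?_
    refine (ae_restrict_iff' measurableSet_Ioi).2 (Eventually.of_forall fun l hl => ?_)
    rw [norm_of_nonneg (mul_nonneg (hw l hl) (sqrt_nonneg _)), mul_comm l]
    exact mul_le_mul_of_nonneg_left (sqrt_sq_sub_sq_le (hz.trans hl.le) z) (hw l hl)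
  constructor
  · rw [← integral_const_mul, ← integral_sub hlw_int (hw_int.const_mul z)]
    refine setIntegral_mono_on (hlw_int.sub (hw_int.const_mul z)) h_int measurableSet_Ioi
      fun l hl => ?_
    nlinarith [mul_le_mul_of_nonneg_left (sub_le_sqrt_sq_sub_sq hz l) (hw l hl)]
  · refine setIntegral_mono_on h_int hlw_int measurableSet_Ioi fun l hl => ?_
    rw [mul_comm l]
    exact mul_le_mul_of_nonneg_left (sqrt_sq_sub_sq_le (hz.trans hl.le) z) (hw l hl)

end SqrtKernel

section Bessel

variable {z : ℝ}

lemma mul_K1_mem_Icc (hz : 0 < z) : z * K1 z ∈ Icc (exp (-z)) ((z + 1) * exp (-z)) := by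
  have h := integral_mul_sqrt_sq_sub_sq_mem_Icc hz.le (fun _ _ => (exp_pos _).le)
    (by simpa using exp_neg_integrableOn_Ioi z one_pos) (integrableOn_Ioi_mul_exp_neg hz.le)
  rw [integral_Ioi_mul_exp_neg hz.le, integral_exp_neg_Ioi] at h
  rw [K1, mul_inv_cancel_left₀ hz.ne']
  convert h using 2
  ring

lemma sq_mul_K2_mem_Icc (hz : 0 < z) :
    z ^ 2 * K2 z ∈ Icc ((z + 2) * exp (-z)) ((z ^ 2 + 2 * z + 2) * exp (-z)) := by
  have h := integral_mul_sqrt_sq_sub_sq_mem_Icc (w := fun l => l * exp (-l)) hz.le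
    (fun l hl => mul_nonneg (hz.trans hl).le (exp_pos _).le)
    (integrableOn_Ioi_mul_exp_neg hz.le) (by simpa [← mul_assoc, ← sq] using
      (integrableOn_Ioi_sq_mul_exp_neg (a := z)))
  simp only [← mul_assoc, ← sq] at h
  rw [integral_Ioi_sq_mul_exp_neg, integral_Ioi_mul_exp_neg hz.le] at h
  rw [K2, zpow_neg, zpow_two, ← sq, mul_inv_cancel_left₀ (by positivity)]
  convert h using 2
  ring

lemma abs_K1_div_K2_sub_half_le (hz : 0 < z) : |K1 z / K2 z - z / 2| ≤ z ^ 2 / 2 := by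
  obtain ⟨hA, hA'⟩ := mul_K1_mem_Icc hz
  obtain ⟨hB, hB'⟩ := sq_mul_K2_mem_Icc hz
  have hE := exp_pos (-z)
  have hB_pos : 0 < z ^ 2 * K2 z := lt_of_lt_of_le (by positivity) hB
  have hK : K1 z / K2 z = z * (z * K1 z) / (z ^ 2 * K2 z) := by
    have : K2 z ≠ 0 := by rintro h; simp [h] at hB_pos
    field_simp
  rw [hK, abs_sub_le_iff, div_sub' hB_pos.ne', sub_div' hB_pos.ne', div_le_iff₀ hB_pos,
    div_le_iff₀ hB_pos]
  constructor
  · nlinarith [mul_le_mul_of_nonneg_left hB (by positivity : 0 ≤ z * (1 + z))]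
  · rcases le_or_gt z 1 with hz1 | hz1
    · nlinarith [mul_le_mul_of_nonneg_left hB' (by nlinarith : 0 ≤ z * (1 - z))]
    · nlinarith [mul_pos hz hB_pos]

end Bessel

noncomputable def SOfRatio (z r : ℝ) : ℝ :=
  3 + z * r + (4 * r + z * r ^ 2 - z) / (3 * r + z * r ^ 2 - z - 4 / z)

lemma S_eq_SOfRatio (z : ℝ) : S z = SOfRatio z (K1 z / K2 z) := rfl

lemma SOfRatio_sub_three_mem_Icc {z r : ℝ} (hz : 0 < z) (hz1 : z ≤ 1) (hr : z / 4 ≤ r)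
    (hr' : r ≤ 1 / 2) : SOfRatio z r - 3 ∈ Icc 0 (z * r) := by
  have hr0 : 0 ≤ r := by linarith
  have hzr : z * r ≤ 1 / 2 := by nlinarith
  obtain ⟨q, hq_def⟩ : ∃ q, q = 4 + z ^ 2 - 3 * z * r - z ^ 2 * r ^ 2 := ⟨_, rfl⟩
  have hq : 0 < q := by nlinarith [mul_nonneg hz.le hr0]
  have hD : 3 * r + z * r ^ 2 - z - 4 / z = -(q / z) := by
    rw [hq_def]; field_simp; ring
  have hN : 0 ≤ 4 * r + z * r ^ 2 - z := by nlinarith [sq_nonneg r]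
  have hNq : 4 * r + z * r ^ 2 - z ≤ r * q := by
    have h₁ : 0 ≤ 1 - 4 * r ^ 2 := by nlinarith
    have h₂ : 0 ≤ r * (1 - r ^ 2) := mul_nonneg hr0 (by nlinarith)
    nlinarith [mul_nonneg hz.le h₁, mul_nonneg (sq_nonneg z) h₂]
  have hS : SOfRatio z r - 3 = z * r - z * ((4 * r + z * r ^ 2 - z) / q) := by
    rw [SOfRatio, hD, div_neg, div_div_eq_mul_div]; ring
  rw [hS]
  constructor
  · exact sub_nonneg.2 (mul_le_mul_of_nonneg_left ((div_le_iff₀ hq).2 hNq) hz.le)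
  · exact sub_le_self _ (mul_nonneg hz.le (div_nonneg hN hq.le))

lemma abs_one_div_sub_one_div_three_le {s : ℝ} (hs : 3 ≤ s) :
    |1 / s - 1 / 3| ≤ (s - 3) / 9 := by
  have h : 1 / 3 - 1 / s = (s - 3) / (3 * s) := by field_simp
  rw [abs_sub_comm, abs_of_nonneg (h ▸ by positivity), h]
  exact div_le_div_of_nonneg_left (by linarith) (by norm_num) (by linarith)

/-- For `0 < z ≤ 1/10`, `|S(z) − 3| ≤ (7/10) z²`; in particular the squared speed
of sound `1/S(z)` satisfies `|1/S(z) − 1/3| ≤ z²`. -/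
theorem speed_of_sound_small_z (z : ℝ) (hz : 0 < z) (hz' : z ≤ 1 / 10) :
    |S z - 3| ≤ (7 / 10) * z ^ 2 ∧ |1 / S z - 1 / 3| ≤ z ^ 2 := by
  obtain ⟨hr, hr'⟩ := abs_le.1 (abs_K1_div_K2_sub_half_le hz)
  have hz2 : z ^ 2 ≤ z / 10 := by nlinarith
  obtain ⟨hS, hS'⟩ :=
    SOfRatio_sub_three_mem_Icc (r := K1 z / K2 z) hz (by linarith) (by nlinarith) (by nlinarith)
  rw [← S_eq_SOfRatio] at hS hS'
  have hS_le : S z - 3 ≤ (11 / 20) * z ^ 2 := hS'.trans (by nlinarith)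
  refine ⟨by rw [abs_of_nonneg hS]; nlinarith, ?_⟩
  exact (abs_one_div_sub_one_div_three_le (by linarith)).trans (by nlinarith)
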